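/- arXiv:1501.01667 — 10 statements merged into one kernel-verified Lean document; each statement's English description precedes it below -/
import Mathlib

section
/- Let G be a finite group with normal subgroup N, let M be a G-module (abelian group with G-action) on which N acts trivially, and let X be a finite G-set with orbit map p: X → Y = N\X, and assume every element of N fixes some point of X. For sections s, s': Y → X of p and any x = Σ_{y} m_y[y] ∈ M[Y]₀, the element s_!(x) − s'_!(x) := Σ_y (m_y[s(y)] − m_y[s'(y)]) lies in I_G·M[X]₀, where I_G·M[X]₀ is the subgroup generated by {g·z − z : g ∈ G, z ∈ M[X]₀}. -/
/-- for two sections `s, s'` of the orbit map `p : X → Y = N\X`, and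
`x = Σ m_y [y] ∈ M[Y]₀`, the difference `s_!(x) − s'_!(x)` lies in `I_G·M[X]₀`,
provided every element of `N` fixes some point of `X` and `N` acts trivially on `M`. -/
theorem stmt2
    (G : Type) [Group G] [Fintype G]
    (N : Subgroup G) [N.Normal]
    (X Y : Type) [Fintype X] [Fintype Y] [DecidableEq X]
    [MulAction G X]
    (p : X → Y)
    (hfib : ∀ x x' : X, p x = p x' ↔ ∃ n ∈ N, n • x = x')
    (hfix : ∀ n ∈ N, ∃ x : X, n • x = x)
    (M : Type) [AddCommGroup M] [DistribMulAction G M]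
    (htriv : ∀ n ∈ N, ∀ m : M, n • m = m)
    (s s' : Y → X) (hs : ∀ y, p (s y) = y) (hs' : ∀ y, p (s' y) = y)
    (m : Y → M) (hm : ∑ y : Y, m y = 0) :
    ((fun x => ∑ y ∈ Finset.univ.filter (fun y => s y = x), m y)
      - fun x => ∑ y ∈ Finset.univ.filter (fun y => s' y = x), m y)
    ∈ AddSubgroup.closure
        {h : X → M | ∃ (g : G) (f : X → M), (∑ x : X, f x) = 0 ∧
          h = (fun x => g • f (g⁻¹ • x)) - f} := by
  classical
  have key : ∀ y : Y,
      ((fun x => if s y = x then m y else 0) - fun x => if s' y = x then m y else 0)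
      ∈ AddSubgroup.closure
        {h : X → M | ∃ (g : G) (f : X → M), (∑ x : X, f x) = 0 ∧
          h = (fun x => g • f (g⁻¹ • x)) - f} := by
    intro y
    have hp : p (s' y) = p (s y) := by rw [hs, hs']
    obtain ⟨n, hnN, hn⟩ := (hfib _ _).mp hp
    obtain ⟨x₀, hx₀⟩ := hfix n hnN
    apply AddSubgroup.subset_closure
    refine ⟨n, (fun x => if s' y = x then m y else 0) - fun x => if x₀ = x then m y else 0,
      ?_, ?_⟩
    · simp [Pi.sub_apply, Finset.sum_sub_distrib, Finset.sum_ite_eq]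
    · funext x
      have h1 : (s' y = n⁻¹ • x) ↔ (s y = x) := by
        rw [eq_comm, inv_smul_eq_iff, hn, eq_comm]
      have h2 : (x₀ = n⁻¹ • x) ↔ (x₀ = x) := by
        rw [eq_comm, inv_smul_eq_iff, hx₀, eq_comm]
      simp only [Pi.sub_apply, smul_sub, smul_ite, htriv n hnN, smul_zero, h1, h2]
      abel
  have heq : ((fun x => ∑ y ∈ Finset.univ.filter (fun y => s y = x), m y)
      - fun x => ∑ y ∈ Finset.univ.filter (fun y => s' y = x), m y)
      = ∑ y : Y, ((fun x => if s y = x then m y else 0)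
          - fun x => if s' y = x then m y else 0) := by
    funext x
    simp [Finset.sum_apply, Finset.sum_filter, Finset.sum_sub_distrib]
  rw [heq]
  exact AddSubgroup.sum_mem _ (fun y _ => key y)
end

section
/- In the setting of the previous statement (G finite, N ⊴ G, X a finite G-set, Y = N\X, every σ ∈ N fixing some x ∈ X, M a G/N-module), if x ∈ M[Y]₀ satisfies N_{G/N}(x) = 0 (i.e., Σ_{τ ∈ G/N} τ·x = 0), then for any section s: Y → X of the orbit map, N_G(s_!(x)) = 0, i.e., Σ_{g ∈ G} g·(s_!(x)) = 0 in M[X]₀. -/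
/-!
Write `N = ker π` and `c = |Stab_N(u)|`. Since `s` is a section of `p`, the inner sum at `g` is
`x((π g)⁻¹ • p u)` if `g • s((π g)⁻¹ • p u) = u` and `0` otherwise. For each `h ∈ H` the elements
`g` of the fibre `π⁻¹(h)` with `g • s(h⁻¹ • p u) = u` form a coset of `Stab_N(u)` (nonempty because
`π` is onto and the fibres of `p` are the `N`-orbits), so the whole sum is
`c • ∑ h, h • x(h⁻¹ • p u) = 0`.
-/

open Finset

theorem Finset.sum_filter_eq_of_leftInverse {X Y M : Type} [Fintype Y] [DecidableEq X]
    [AddCommMonoid M] {p : X → Y} {s : Y → X} (hs : ∀ y, p (s y) = y) (x : Y → M) (v : X) :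
    ∑ y ∈ univ.filter (fun y => s y = v), x y = if s (p v) = v then x (p v) else 0 := by
  classical
  have hiff : ∀ y, s y = v ↔ y = p v ∧ s (p v) = v := fun y =>
    ⟨fun h => ⟨h ▸ (hs y).symm, by rw [← h, hs]⟩, fun ⟨hy, h⟩ => hy ▸ h⟩
  rw [sum_filter, sum_congr rfl fun y _ => if_congr (hiff y) rfl rfl]
  simp only [ite_and, sum_ite_eq', mem_univ, if_true]

theorem Finset.sum_ite_comp_eq_card_smul_sum {G H M : Type} [Fintype G] [Fintype H]
    [DecidableEq H] [AddCommMonoid M] (π : G → H) (P : G → Prop) [DecidablePred P]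
    (f : H → M) (c : ℕ) (hc : ∀ h, (univ.filter (fun g => P g ∧ π g = h)).card = c) :
    ∑ g, (if P g then f (π g) else 0) = c • ∑ h, f h := by
  rw [← sum_filter, ← sum_fiberwise' _ π f, smul_sum]
  simp only [filter_filter, sum_const, hc]

theorem card_filter_smul_eq_and_map_eq {G H X : Type} [Group G] [Fintype G] [Group H]
    [DecidableEq H] [MulAction G X] [DecidableEq X] (π : G →* H)
    {h : H} {v u : X} {g₁ : G} (hg₁π : π g₁ = h) (hg₁ : g₁ • v = u) :
    (univ.filter (fun g => g • v = u ∧ π g = h)).card =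
      (univ.filter (fun n => n • u = u ∧ π n = 1)).card := by
  obtain rfl : v = g₁⁻¹ • u := eq_inv_smul_iff.mpr hg₁
  refine card_nbij' (· * g₁⁻¹) (· * g₁) ?_ ?_ (fun g _ => inv_mul_cancel_right g g₁)
    (fun n _ => mul_inv_cancel_right n g₁)
  · intro g hg
    simp only [coe_filter, mem_univ, true_and, Set.mem_ofPred_eq] at hg ⊢
    exact ⟨by rw [mul_smul, hg.1], by rw [map_mul, map_inv, hg.2, hg₁π, mul_inv_cancel]⟩
  · intro n hn
    simp only [coe_filter, mem_univ, true_and, Set.mem_ofPred_eq] at hn ⊢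
    exact ⟨by rw [mul_smul, smul_inv_smul, hn.1], by rw [map_mul, hn.2, one_mul, hg₁π]⟩

theorem card_filter_smul_section_eq {G H X Y : Type} [Group G] [Fintype G] [Group H]
    [DecidableEq H] [MulAction G X] [DecidableEq X] [MulAction H Y]
    {π : G →* H} (hπ : Function.Surjective π) {p : X → Y}
    (hpeq : ∀ (g : G) (x : X), p (g • x) = π g • p x)
    (hfib : ∀ x x' : X, p x = p x' ↔ ∃ g : G, π g = 1 ∧ g • x = x')
    {s : Y → X} (hs : ∀ y, p (s y) = y) (u : X) (h : H) :
    (univ.filter (fun g => g • s ((π g)⁻¹ • p u) = u ∧ π g = h)).card =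
      (univ.filter (fun n : G => n • u = u ∧ π n = 1)).card := by
  obtain ⟨g₀, rfl⟩ := hπ h
  obtain ⟨n, hn, hnu⟩ := (hfib (g₀ • s ((π g₀)⁻¹ • p u)) u).mp (by rw [hpeq, hs, smul_inv_smul])
  have hg₁π : π (n * g₀) = π g₀ := by rw [map_mul, hn, one_mul]
  rw [← card_filter_smul_eq_and_map_eq π hg₁π (by rw [mul_smul, hnu])]
  exact congrArg card (filter_congr fun g _ => and_congr_left fun hg => by rw [hg])

theorem stmt3_general
    (G H : Type) [Group G] [Fintype G] [Group H] [Fintype H]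
    (π : G →* H) (hπ : Function.Surjective π)
    (X Y : Type) [Fintype Y] [DecidableEq X]
    [MulAction G X] [MulAction H Y]
    (p : X → Y)
    (hpeq : ∀ (g : G) (x : X), p (g • x) = π g • p x)
    (hfib : ∀ x x' : X, p x = p x' ↔ ∃ g : G, π g = 1 ∧ g • x = x')
    (s : Y → X) (hs : ∀ y, p (s y) = y)
    (M : Type) [AddCommGroup M] [DistribMulAction H M]
    (x : Y → M)
    (hnorm : ∀ y : Y, ∑ h : H, h • x (h⁻¹ • y) = 0) :
    ∀ u : X,
      (∑ g : G, π g • (∑ y ∈ Finset.univ.filter (fun y => s y = g⁻¹ • u), x y)) = 0 := by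
  classical
  intro u
  calc ∑ g : G, π g • ∑ y ∈ univ.filter (fun y => s y = g⁻¹ • u), x y
      = ∑ g : G, if g • s ((π g)⁻¹ • p u) = u then π g • x ((π g)⁻¹ • p u) else 0 := by
        refine sum_congr rfl fun g _ => ?_
        rw [sum_filter_eq_of_leftInverse hs, hpeq, map_inv]
        by_cases hg : g • s ((π g)⁻¹ • p u) = u
        · rw [if_pos hg, if_pos (eq_inv_smul_iff.mpr hg)]
        · rw [if_neg hg, if_neg (mt eq_inv_smul_iff.mp hg), smul_zero]
    _ = _ • ∑ h : H, h • x (h⁻¹ • p u) :=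
        sum_ite_comp_eq_card_smul_sum π _ (fun h => h • x (h⁻¹ • p u)) _
          (card_filter_smul_section_eq hπ hpeq hfib hs u)
    _ = 0 := by rw [hnorm, smul_zero]

/-- if `x ∈ M[Y]₀` is killed by the norm of `G/N`, then `s_!(x)` is killed
by the norm of `G`, for any section `s` of the orbit map `p : X → Y = N\X`
(with `N = ker π` and every element of `N` fixing some point of `X`). -/
theorem stmt3
    (G H : Type) [Group G] [Fintype G] [Group H] [Fintype H]
    (π : G →* H) (hπ : Function.Surjective π)
    (X Y : Type) [Fintype X] [Fintype Y] [DecidableEq X]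
    [MulAction G X] [MulAction H Y]
    (p : X → Y)
    (hpeq : ∀ (g : G) (x : X), p (g • x) = π g • p x)
    (hfib : ∀ x x' : X, p x = p x' ↔ ∃ g : G, π g = 1 ∧ g • x = x')
    (hfix : ∀ g : G, π g = 1 → ∃ x : X, g • x = x)
    (s : Y → X) (hs : ∀ y, p (s y) = y)
    (M : Type) [AddCommGroup M] [DistribMulAction H M]
    (x : Y → M) (hx0 : ∑ y : Y, x y = 0)
    (hnorm : ∀ y : Y, ∑ h : H, h • x (h⁻¹ • y) = 0) :
    ∀ u : X,
      (∑ g : G, π g • (∑ y ∈ Finset.univ.filter (fun y => s y = g⁻¹ • u), x y)) = 0 :=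
  stmt3_general G H π hπ X Y p hpeq hfib s hs M x hnorm
end

section
/- Let Γ be a finite group acting on a finite set S, and Ṡ ⊆ S a subset meeting every Γ-orbit such that for every σ ∈ Γ there exists v ∈ Ṡ with σ·v = v. Let M be any Γ-module. Then every class in the Tate cohomology group Ĥ^{-1}(Γ, Maps(S, M)₀) = ker(N_Γ)/I_Γ·Maps(S,M)₀ has a representative supported on Ṡ, i.e., a function h: S → M with Σ h = 0, N_Γ h = 0, and h(w) = 0 for all w ∉ Ṡ. -/
/-- every class in `Ĥ^{-1}(Γ, Maps(S,M)₀)` has a representative supported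
on a set `Ṡ` of orbit representatives, provided every `σ ∈ Γ` fixes some `v ∈ Ṡ`. -/
theorem stmt5
    (Γ S M : Type) [Group Γ] [Fintype Γ] [Fintype S] [MulAction Γ S]
    [AddCommGroup M] [DistribMulAction Γ M]
    (Sdot : Set S)
    (hrep : ∀ w : S, ∃ σ : Γ, σ • w ∈ Sdot)
    (hfix : ∀ σ : Γ, ∃ v ∈ Sdot, σ • v = v)
    (h : S → M) (h0 : ∑ w : S, h w = 0)
    (hnorm : ∀ w : S, ∑ σ : Γ, σ • h (σ⁻¹ • w) = 0) :
    ∃ h' : S → M,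
      (∑ w : S, h' w = 0) ∧
      (∀ w : S, ∑ σ : Γ, σ • h' (σ⁻¹ • w) = 0) ∧
      (∀ w : S, w ∉ Sdot → h' w = 0) ∧
      (h - h') ∈ AddSubgroup.closure
        {z : S → M | ∃ (σ : Γ) (f : S → M), (∑ w : S, f w) = 0 ∧
          z = (fun w => σ • f (σ⁻¹ • w)) - f} := by
  classical
  choose τ hτ using hrep
  choose v hvmem hvfix using hfix
  set W : Finset S := Finset.univ.filter (fun w => w ∉ Sdot) with hW
  set f : S → S → M := fun w => Pi.single w (-(h w)) + Pi.single (v (τ w)) (h w)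
    with hf
  set z : S → S → M := fun w => (fun u => τ w • f w ((τ w)⁻¹ • u)) - f w with hz
  -- sum of f w is zero
  have hsumf : ∀ w : S, ∑ u : S, f w u = 0 := by
    intro w
    simp [hf, Finset.sum_add_distrib, Finset.sum_pi_single]
  -- sum of z w is zero
  have hsumz : ∀ w : S, ∑ u : S, z w u = 0 := by
    intro w
    have : ∑ u : S, τ w • f w ((τ w)⁻¹ • u) = ∑ u : S, τ w • f w u := by
      refine Fintype.sum_equiv (MulAction.toPerm (τ w)⁻¹) _ _ (fun u => ?_)
      simp [MulAction.toPerm_apply]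
    simp only [hz, Pi.sub_apply, Finset.sum_sub_distrib, this, ← Finset.smul_sum,
      hsumf, smul_zero, sub_zero]
  -- z w vanishes off Sdot except at w itself (for w ∉ Sdot)
  have hzero : ∀ w : S, w ∉ Sdot → ∀ u : S, u ∉ Sdot → u ≠ w → z w u = 0 := by
    intro w hw u hu huw
    have h1 : (τ w)⁻¹ • u ≠ w := by
      intro e
      have he : τ w • ((τ w)⁻¹ • u) ∈ Sdot := by rw [e]; exact hτ w
      rw [smul_inv_smul] at he
      exact hu he
    have h2 : (τ w)⁻¹ • u ≠ v (τ w) := by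
      intro e
      apply hu
      have : u = τ w • v (τ w) := by rw [← e, smul_inv_smul]
      rw [this, hvfix]
      exact hvmem _
    have h3 : u ≠ v (τ w) := fun e => hu (e ▸ hvmem _)
    simp [hz, hf, Pi.single_apply, h1, h2, huw, h3]
  -- z w at w equals h w (for w ∉ Sdot)
  have hzw : ∀ w : S, w ∉ Sdot → z w w = h w := by
    intro w hw
    have h1 : (τ w)⁻¹ • w ≠ w := by
      intro e
      have he : τ w • ((τ w)⁻¹ • w) ∈ Sdot := by rw [e]; exact hτ w
      rw [smul_inv_smul] at he
      exact hw he
    have h2 : (τ w)⁻¹ • w ≠ v (τ w) := by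
      intro e
      apply hw
      have : w = τ w • v (τ w) := by rw [← e, smul_inv_smul]
      rw [this, hvfix]
      exact hvmem _
    have h3 : w ≠ v (τ w) := fun e => hw (e ▸ hvmem _)
    simp [hz, hf, Pi.single_apply, h1, h2, h3]
  refine ⟨h - ∑ w ∈ W, z w, ?_, ?_, ?_, ?_⟩
  · -- total sum zero
    have hz0 : ∑ u : S, ∑ w ∈ W, z w u = 0 := by
      rw [Finset.sum_comm]; simp [hsumz]
    simp only [Pi.sub_apply, Finset.sum_apply, Finset.sum_sub_distrib, h0, hz0, sub_zero]
  · -- norm zero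
    intro u
    have key : ∀ w : S, ∑ σ : Γ, σ • z w (σ⁻¹ • u) = 0 := by
      intro w
      have : ∑ σ : Γ, σ • (τ w • f w ((τ w)⁻¹ • (σ⁻¹ • u)))
          = ∑ σ : Γ, σ • f w (σ⁻¹ • u) := by
        refine Fintype.sum_equiv (Equiv.mulRight (τ w)) _ _ (fun σ => ?_)
        simp [smul_smul, mul_inv_rev]
      simp only [hz, Pi.sub_apply, smul_sub, Finset.sum_sub_distrib, this, sub_self]
    have hz0 : ∑ σ : Γ, ∑ w ∈ W, σ • z w (σ⁻¹ • u) = 0 := by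
      rw [Finset.sum_comm]; simp [key]
    simp only [Pi.sub_apply, Finset.sum_apply, smul_sub, Finset.smul_sum,
      Finset.sum_sub_distrib, hnorm u, hz0, sub_zero]
  · -- supported on Sdot
    intro u hu
    have hmem : u ∈ W := by simp [hW, hu]
    have : ∑ w ∈ W, z w u = h u := by
      rw [Finset.sum_eq_single u]
      · exact hzw u hu
      · intro w hwW hwu
        have hw : w ∉ Sdot := by simpa [hW] using hwW
        exact hzero w hw u hu (Ne.symm hwu)
      · intro habs; exact absurd hmem habs
    simp [this]
  · -- difference lies in I_Γ
    have : h - (h - ∑ w ∈ W, z w) = ∑ w ∈ W, z w := by abel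
    rw [this]
    refine AddSubgroup.sum_mem _ (fun w _ => AddSubgroup.subset_closure ?_)
    exact ⟨τ w, f w, hsumf w, rfl⟩
end

section
/- Let Γ be a finite group, Ẏ a Γ-module containing a Γ-submodule Y with Ẏ/Y finite, and let S be a finite Γ-set with distinguished subset Ṡ meeting every orbit exactly once, satisfying: for every σ ∈ Γ there exists v ∈ Ṡ with σv = v. Let Ȳ[S,Ṡ]₀ denote the subgroup of Ȳ[S]₀ := (Ẏ ⊗ Z[S]₀) consisting of elements f with f(w) ∈ Y for all w ∉ Ṡ. Then every element of the quotient Ȳ[S,Ṡ]₀ / I_Γ·Y[S]₀ has a representative supported on Ṡ. -/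
/-!
To move the value `y = f w` at a point `w ∉ Ṡ` onto `Ṡ`, pick `σ` with `σ w ∈ Ṡ` and `v ∈ Ṡ`
fixed by `σ`, and put `g = y δ_w - y δ_v ∈ Y[S]₀`. Then `σ g - g` is supported on
`{σ w, v, w}`, and its only point off `Ṡ` is `w`, where it takes the value `-y`.
Subtracting `g - σ g` for every `w ∉ Ṡ` kills `f` off `Ṡ`.
-/

open Finset

theorem sum_smul_comp_inv_smul {Γ S M : Type*} [Group Γ] [Fintype S] [MulAction Γ S]
    [AddCommMonoid M] [DistribMulAction Γ M] (σ : Γ) (g : S → M) :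
    ∑ x, σ • g (σ⁻¹ • x) = σ • ∑ x, g x := by
  rw [Finset.smul_sum]
  exact Equiv.sum_comp (MulAction.toPerm σ⁻¹) (fun x => σ • g x)

section

variable (Γ : Type*) {S M : Type*} [Group Γ] [Fintype S] [MulAction Γ S]
  [AddCommGroup M] [DistribMulAction Γ M]

/-- The generators `σ g - g` (`σ ∈ Γ`, `g ∈ Y[S]₀`) of `I_Γ · Y[S]₀`. -/
def augmentationGenerators (Y : AddSubgroup M) : Set (S → M) :=
  {z | ∃ (σ : Γ) (g : S → M), (∀ w, g w ∈ Y) ∧ (∑ w, g w) = 0 ∧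
    z = (fun w => σ • g (σ⁻¹ • w)) - g}

variable {Γ}

theorem sum_eq_zero_of_mem_closure_augmentationGenerators {Y : AddSubgroup M} {z : S → M}
    (hz : z ∈ AddSubgroup.closure (augmentationGenerators Γ Y)) : ∑ x, z x = 0 := by
  induction hz using AddSubgroup.closure_induction with
  | mem z hz =>
    obtain ⟨σ, g, -, hg, rfl⟩ := hz
    simp only [Pi.sub_apply, sum_sub_distrib, sum_smul_comp_inv_smul, hg, smul_zero, sub_zero]
  | zero => simp
  | add z z' _ _ hz hz' => simp only [Pi.add_apply, sum_add_distrib, hz, hz', add_zero]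
  | neg z _ hz => simp only [Pi.neg_apply, sum_neg_distrib, hz, neg_zero]

variable [DecidableEq S] {Y : AddSubgroup M} {Sdot : Set S}

theorem exists_mem_closure_eqOn_compl_single_of_smul_mem {w : S} {σ : Γ} (hσw : σ • w ∈ Sdot)
    {v : S} (hv : v ∈ Sdot) (hσv : σ • v = v) {y : M} (hy : y ∈ Y) :
    ∃ r ∈ AddSubgroup.closure (augmentationGenerators Γ Y),
      ∀ x ∉ Sdot, r x = (Pi.single w y : S → M) x := by
  set g : S → M := Pi.single w y - Pi.single v y
  have hgY : ∀ x, g x ∈ Y := fun x => by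
    apply sub_mem <;> rw [Pi.single_apply] <;> split_ifs <;> simp [hy]
  have hgsum : ∑ x, g x = 0 := by simp [g, sum_sub_distrib]
  refine ⟨-((fun x => σ • g (σ⁻¹ • x)) - g),
    neg_mem (AddSubgroup.subset_closure ⟨σ, g, hgY, hgsum, rfl⟩), fun x hx => ?_⟩
  have hxw : σ⁻¹ • x ≠ w := fun h => hx (by rwa [← smul_inv_smul σ x, h])
  have hxv : σ⁻¹ • x ≠ v := fun h => hx (by rwa [← smul_inv_smul σ x, h, hσv])
  have hxv₀ : x ≠ v := fun h => hx (h ▸ hv)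
  simp [g, Pi.single_eq_of_ne hxw, Pi.single_eq_of_ne hxv, Pi.single_eq_of_ne hxv₀]

theorem exists_mem_closure_eqOn_compl_single
    (hrep : ∀ w : S, ∃ σ : Γ, σ • w ∈ Sdot) (hfix : ∀ σ : Γ, ∃ v ∈ Sdot, σ • v = v)
    (w : S) {y : M} (hy : w ∉ Sdot → y ∈ Y) :
    ∃ r ∈ AddSubgroup.closure (augmentationGenerators Γ Y),
      ∀ x ∉ Sdot, r x = (Pi.single w y : S → M) x := by
  by_cases hw : w ∈ Sdot
  · exact ⟨0, zero_mem _, fun x hx => by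
      rw [Pi.zero_apply, Pi.single_eq_of_ne (show x ≠ w from fun h => hx (h ▸ hw))]⟩
  · obtain ⟨σ, hσw⟩ := hrep w
    obtain ⟨v, hv, hσv⟩ := hfix σ
    exact exists_mem_closure_eqOn_compl_single_of_smul_mem hσw hv hσv (hy hw)

end

theorem stmt6_general
    (Γ S : Type) [Group Γ] [Fintype S] [MulAction Γ S]
    (Ybar : Type) [AddCommGroup Ybar] [DistribMulAction Γ Ybar]
    (Y : AddSubgroup Ybar)
    (Sdot : Set S)
    (hrep : ∀ w : S, ∃ σ : Γ, σ • w ∈ Sdot)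
    (hfix : ∀ σ : Γ, ∃ v ∈ Sdot, σ • v = v)
    (f : S → Ybar) (hf0 : ∑ w : S, f w = 0)
    (hfY : ∀ w : S, w ∉ Sdot → f w ∈ Y) :
    ∃ f' : S → Ybar,
      (∑ w : S, f' w = 0) ∧
      (∀ w : S, w ∉ Sdot → f' w = 0) ∧
      (f - f') ∈ AddSubgroup.closure
        {z : S → Ybar | ∃ (σ : Γ) (g : S → Ybar), (∀ w, g w ∈ Y) ∧ (∑ w : S, g w) = 0 ∧
          z = (fun w => σ • g (σ⁻¹ • w)) - g} := by
  classical
  choose r hrR hroff using fun w => exists_mem_closure_eqOn_compl_single hrep hfix w (hfY w)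
  have hR : ∑ w, r w ∈ AddSubgroup.closure (augmentationGenerators Γ Y) :=
    sum_mem fun w _ => hrR w
  refine ⟨f - ∑ w, r w, ?_, fun x hx => ?_, by rwa [sub_sub_cancel]⟩
  · simp only [Pi.sub_apply, sum_sub_distrib, hf0,
      sum_eq_zero_of_mem_closure_augmentationGenerators hR, sub_zero]
  · calc f x - (∑ w, r w) x = f x - (∑ w, Pi.single w (f w)) x := by
          simp only [Finset.sum_apply, hroff _ x hx]
      _ = 0 := by rw [univ_sum_single, sub_self]

/-- every element of `Ȳ[S,Ṡ]₀ / I_Γ·Y[S]₀` has a representative supported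
on `Ṡ`.  Here `Y ⊆ Ȳ` are `Γ`-modules, `Ṡ ⊆ S` is a set of orbit representatives
(one per orbit) such that every `σ ∈ Γ` fixes some `v ∈ Ṡ`, and `Ȳ[S,Ṡ]₀` consists of
sum-zero `Ȳ`-valued maps taking values in `Y` off `Ṡ`. -/
theorem stmt6
    (Γ S : Type) [Group Γ] [Fintype Γ] [Fintype S] [MulAction Γ S]
    (Ybar : Type) [AddCommGroup Ybar] [DistribMulAction Γ Ybar]
    (Y : AddSubgroup Ybar) (hYstab : ∀ (σ : Γ) (y : Ybar), y ∈ Y → σ • y ∈ Y)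
    (Sdot : Set S)
    (hrep : ∀ w : S, ∃ σ : Γ, σ • w ∈ Sdot)
    (huniq : ∀ v ∈ Sdot, ∀ v' ∈ Sdot, (∃ σ : Γ, σ • v = v') → v = v')
    (hfix : ∀ σ : Γ, ∃ v ∈ Sdot, σ • v = v)
    (f : S → Ybar) (hf0 : ∑ w : S, f w = 0)
    (hfY : ∀ w : S, w ∉ Sdot → f w ∈ Y) :
    ∃ f' : S → Ybar,
      (∑ w : S, f' w = 0) ∧
      (∀ w : S, w ∉ Sdot → f' w = 0) ∧
      (f - f') ∈ AddSubgroup.closure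
        {z : S → Ybar | ∃ (σ : Γ) (g : S → Ybar), (∀ w, g w ∈ Y) ∧ (∑ w : S, g w) = 0 ∧
          z = (fun w => σ • g (σ⁻¹ • w)) - g} :=
  stmt6_general Γ S Ybar Y Sdot hrep hfix f hf0 hfY
end

section
/- Let Γ be a finite group, Y ⊆ Ȳ Γ-modules with Ȳ/Y torsion and Ȳ torsion-free, S a finite Γ-set, Ṡ ⊆ S a set of orbit representatives. Let Ȳ[S,Ṡ]₀^N denote the set of f ∈ Ȳ[S,Ṡ]₀ with N_Γ(f) = 0. Then: Ȳ[S,Ṡ]₀^N / I_Γ·Y[S]₀ equals the torsion subgroup of Ȳ[S,Ṡ]₀ / I_Γ·Y[S]₀. That is: (a) if f ∈ Ȳ[S,Ṡ]₀ and n·f ∈ I_Γ·Y[S]₀ for some n > 0, then N_Γ(f) = 0; and (b) if N_Γ(f)=0 and the group ker(N_Γ)∩Y[S]₀ modulo I_Γ Y[S]₀ is finite (which holds as it is Ĥ^{-1} of a finitely generated module over a finite group), then some positive multiple of f lies in I_Γ·Y[S]₀ — given the hypothesis that Ĥ^{-1}(Γ, Y[S]₀) is finite. -/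
/-!
The norm `N_Γ` kills every generator `σg − g` of `I_Γ·Y[S]₀` (reindex the sum over `Γ` by
`τ ↦ τσ`), so it vanishes on `I_Γ·Y[S]₀`; if `n • f` lies there then `n • N_Γ f = 0`, and
`N_Γ f = 0` because `Ȳ` is torsion-free. Conversely, since `S` is finite and `Ȳ/Y` is torsion,
some `k • f` takes values in `Y`; if `N_Γ f = 0` then `k • f` is a norm-zero element of `Y[S]₀`,
which is killed modulo `I_Γ·Y[S]₀` by the exponent `m` of `Ĥ^{-1}(Γ, Y[S]₀)`.
-/

/-- The subgroup `I_Γ·Y[S]₀` of `S → Ȳ` generated by elements `σg − g` for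
`Y`-valued sum-zero `g`. -/
def Iaug (Γ S Ybar : Type) [Group Γ] [Fintype S] [MulAction Γ S]
    [AddCommGroup Ybar] [DistribMulAction Γ Ybar] (Y : AddSubgroup Ybar) :
    AddSubgroup (S → Ybar) :=
  AddSubgroup.closure
    {z : S → Ybar | ∃ (σ : Γ) (g : S → Ybar), (∀ w, g w ∈ Y) ∧ (∑ w : S, g w) = 0 ∧
      z = (fun w => σ • g (σ⁻¹ • w)) - g}

open Finset

section Norm

variable (Γ : Type) {S Ybar : Type} [Group Γ] [Fintype Γ] [MulAction Γ S]
  [AddCommGroup Ybar] [DistribMulAction Γ Ybar]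

/-- The `w`-component of the norm `N_Γ` on `Ȳ[S] = S → Ȳ`. -/
def normAt (w : S) : (S → Ybar) →+ Ybar where
  toFun f := ∑ σ : Γ, σ • f (σ⁻¹ • w)
  map_zero' := by simp
  map_add' f g := by simp [smul_add, sum_add_distrib]

@[simp]
lemma normAt_apply (w : S) (f : S → Ybar) : normAt Γ w f = ∑ σ : Γ, σ • f (σ⁻¹ • w) := rfl

lemma normAt_translate_sub_self (σ : Γ) (g : S → Ybar) (w : S) :
    normAt Γ w ((fun v => σ • g (σ⁻¹ • v)) - g) = 0 := by
  have hshift : ∑ τ : Γ, (τ * σ) • g ((τ * σ)⁻¹ • w) = ∑ τ : Γ, τ • g (τ⁻¹ • w) :=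
    Fintype.sum_equiv (Equiv.mulRight σ) _ _ fun _ => rfl
  simpa [smul_sub, mul_smul, sum_sub_distrib, sub_eq_zero] using hshift

lemma iaug_le_ker_normAt [Fintype S] (Y : AddSubgroup Ybar) (w : S) :
    Iaug Γ S Ybar Y ≤ (normAt Γ w).ker := by
  rw [Iaug, AddSubgroup.closure_le]
  rintro _ ⟨σ, g, -, -, rfl⟩
  exact normAt_translate_sub_self Γ σ g w

lemma normAt_eq_zero_of_nsmul_mem_iaug [Fintype S]
    (htf : ∀ n : ℕ, 0 < n → ∀ y : Ybar, n • y = 0 → y = 0) {Y : AddSubgroup Ybar}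
    {n : ℕ} (hn : 0 < n) {f : S → Ybar} (hf : n • f ∈ Iaug Γ S Ybar Y) (w : S) :
    normAt Γ w f = 0 :=
  htf n hn _ <| by rw [← map_nsmul]; exact iaug_le_ker_normAt Γ Y w hf

end Norm

lemma exists_pos_nsmul_forall_mem {S G : Type} [Fintype S] [AddCommGroup G] {Y : AddSubgroup G}
    (htor : ∀ y : G, ∃ n : ℕ, 0 < n ∧ n • y ∈ Y) (f : S → G) :
    ∃ k : ℕ, 0 < k ∧ ∀ w, k • f w ∈ Y := by
  choose c hc hcY using fun w => htor (f w)
  refine ⟨∏ w, c w, prod_pos fun w _ => hc w, fun w => ?_⟩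
  obtain ⟨d, hd⟩ := dvd_prod_of_mem c (mem_univ w)
  rw [hd, mul_comm, mul_smul]
  exact Y.nsmul_mem (hcY w) d

theorem stmt7_general
    (Γ S : Type) [Group Γ] [Fintype Γ] [Fintype S] [MulAction Γ S]
    (Ybar : Type) [AddCommGroup Ybar] [DistribMulAction Γ Ybar]
    (htf : ∀ (n : ℕ), 0 < n → ∀ y : Ybar, n • y = 0 → y = 0)
    (Y : AddSubgroup Ybar)
    (htor : ∀ y : Ybar, ∃ n : ℕ, 0 < n ∧ n • y ∈ Y)
    (Sdot : Set S) :
    -- (a)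
    (∀ f : S → Ybar, (∑ w : S, f w = 0) → (∀ w : S, w ∉ Sdot → f w ∈ Y) →
      ∀ n : ℕ, 0 < n → (n • f) ∈ Iaug Γ S Ybar Y →
      ∀ w : S, ∑ σ : Γ, σ • f (σ⁻¹ • w) = 0) ∧
    -- (b)
    ((∃ m : ℕ, 0 < m ∧ ∀ g : S → Ybar, (∀ w, g w ∈ Y) → (∑ w : S, g w = 0) →
        (∀ w : S, ∑ σ : Γ, σ • g (σ⁻¹ • w) = 0) → (m • g) ∈ Iaug Γ S Ybar Y) →
      ∀ f : S → Ybar, (∑ w : S, f w = 0) → (∀ w : S, w ∉ Sdot → f w ∈ Y) →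
        (∀ w : S, ∑ σ : Γ, σ • f (σ⁻¹ • w) = 0) →
        ∃ n : ℕ, 0 < n ∧ (n • f) ∈ Iaug Γ S Ybar Y) := by
  refine ⟨fun f _ _ n hn hf w => normAt_eq_zero_of_nsmul_mem_iaug Γ htf hn hf w, ?_⟩
  rintro ⟨m, hm, hexp⟩ f hsum - hnorm
  obtain ⟨k, hk, hkY⟩ := exists_pos_nsmul_forall_mem htor f
  have hkf : m • k • f ∈ Iaug Γ S Ybar Y := by
    refine hexp (k • f) hkY ?_ fun w => ?_
    · simp only [Pi.smul_apply, ← smul_sum, hsum, smul_zero]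
    · rw [← normAt_apply, map_nsmul, normAt_apply, hnorm w, smul_zero]
  exact ⟨m * k, Nat.mul_pos hm hk, by rwa [mul_smul]⟩

/-- `Ȳ[S,Ṡ]₀^{N_Γ} / I_Γ·Y[S]₀` equals the torsion subgroup of
`Ȳ[S,Ṡ]₀ / I_Γ·Y[S]₀`:
(a) if a positive multiple of `f` lies in `I_Γ·Y[S]₀` then `f` is killed by the norm;
(b) conversely, assuming `Ĥ^{-1}(Γ, Y[S]₀)` has finite exponent, a norm-zero `f` has a
positive multiple in `I_Γ·Y[S]₀`. -/
theorem stmt7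
    (Γ S : Type) [Group Γ] [Fintype Γ] [Fintype S] [MulAction Γ S]
    (Ybar : Type) [AddCommGroup Ybar] [DistribMulAction Γ Ybar]
    (htf : ∀ (n : ℕ), 0 < n → ∀ y : Ybar, n • y = 0 → y = 0)
    (Y : AddSubgroup Ybar) (hYstab : ∀ (σ : Γ) (y : Ybar), y ∈ Y → σ • y ∈ Y)
    (htor : ∀ y : Ybar, ∃ n : ℕ, 0 < n ∧ n • y ∈ Y)
    (Sdot : Set S) :
    -- (a)
    (∀ f : S → Ybar, (∑ w : S, f w = 0) → (∀ w : S, w ∉ Sdot → f w ∈ Y) →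
      ∀ n : ℕ, 0 < n → (n • f) ∈ Iaug Γ S Ybar Y →
      ∀ w : S, ∑ σ : Γ, σ • f (σ⁻¹ • w) = 0) ∧
    -- (b)
    ((∃ m : ℕ, 0 < m ∧ ∀ g : S → Ybar, (∀ w, g w ∈ Y) → (∑ w : S, g w = 0) →
        (∀ w : S, ∑ σ : Γ, σ • g (σ⁻¹ • w) = 0) → (m • g) ∈ Iaug Γ S Ybar Y) →
      ∀ f : S → Ybar, (∑ w : S, f w = 0) → (∀ w : S, w ∉ Sdot → f w ∈ Y) →
        (∀ w : S, ∑ σ : Γ, σ • f (σ⁻¹ • w) = 0) →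
        ∃ n : ℕ, 0 < n ∧ (n • f) ∈ Iaug Γ S Ybar Y) :=
  stmt7_general Γ S Ybar htf Y htor Sdot
end

section
/- Let Γ be a profinite group, Δ ≤ Γ a closed subgroup, X a discrete smooth Δ-module, and let r: Γ → Δ, s: Γ → Γ be a continuous factorization γ = r(γ)s(γ) as in the Shapiro-section setup (with r left-Δ-equivariant, continuous in the inverse-limit sense). Define, for a continuous homogeneous k-cochain c ∈ C^k(Δ, X), the function S(c)(σ₀,…,σ_k)(a) = r(a)·c(r(a)⁻¹r(aσ₀), …, r(a)⁻¹r(aσ_k)). Then: (1) for fixed σ₀,…,σ_k ∈ Γ, the map a ↦ S(c)(σ₀,…,σ_k)(a) is continuous and satisfies S(c)(σ₀,…,σ_k)(δa) = δ·S(c)(σ₀,…,σ_k)(a) for δ ∈ Δ, hence lies in the smooth induction Ind_Δ^Γ X; (2) S(c) is Γ-equivariant: S(c)(τσ₀,…,τσ_k)(a) = S(c)(σ₀,…,σ_k)(aτ) for all τ ∈ Γ, so S(c) ∈ C^k(Γ, Ind_Δ^Γ X) (homogeneous cochains). -/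
/-!
Since `c` is `Δ`-equivariant, `ρ • c (ρ⁻¹ x₀, …, ρ⁻¹ x_k)` does not depend on `ρ ∈ Δ`,
so `S(c)(σ)(a)` may be computed with any `ρ` in place of `r(a)` and depends only on the
tuple `(r(aσ₀), …, r(aσ_k))`. Then `Γ`-equivariance is just `a(τσⱼ) = (aτ)σⱼ`,
`Δ`-equivariance in `a` comes from that of `r`, and both continuity statements from
`x⁻¹y ∈ K → r(x)⁻¹r(y) ∈ K`.
-/

/-- The explicit Shapiro map on homogeneous cochains:
`S(c)(σ₀,…,σ_k)(a) = r(a) • c (r(a)⁻¹ r(aσ₀), …, r(a)⁻¹ r(aσ_k))`. -/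
def shap {Γ : Type} [Group Γ] {Δ : Subgroup Γ} {X : Type} [AddCommGroup X]
    [DistribMulAction Δ X] (r : Γ → Δ) {k : ℕ}
    (c : (Fin (k + 1) → Δ) → X) : (Fin (k + 1) → Γ) → Γ → X :=
  fun σ a => r a • c (fun j => (r a)⁻¹ * r (a * σ j))

section Shapiro

variable {Γ : Type} [Group Γ] {Δ : Subgroup Γ} {X : Type} [AddCommGroup X]
  [DistribMulAction Δ X] {k : ℕ} {c : (Fin (k + 1) → Δ) → X}

theorem smul_inv_mul_eq_smul_inv_mul
    (hc : ∀ (δ : Δ) (σ : Fin (k + 1) → Δ), c (fun j => δ * σ j) = δ • c σ)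
    (x : Fin (k + 1) → Δ) (ρ ρ' : Δ) :
    ρ • c (fun j => ρ⁻¹ * x j) = ρ' • c (fun j => ρ'⁻¹ * x j) := by
  calc ρ • c (fun j => ρ⁻¹ * x j)
      = ρ • c (fun j => (ρ⁻¹ * ρ') * (ρ'⁻¹ * x j)) := by
        simp only [mul_assoc, mul_inv_cancel_left]
    _ = ρ' • c (fun j => ρ'⁻¹ * x j) := by rw [hc, ← mul_smul, mul_inv_cancel_left]

theorem shap_eq_smul (r : Γ → Δ)
    (hc : ∀ (δ : Δ) (σ : Fin (k + 1) → Δ), c (fun j => δ * σ j) = δ • c σ)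
    (σ : Fin (k + 1) → Γ) (a : Γ) (ρ : Δ) :
    shap r c σ a = ρ • c (fun j => ρ⁻¹ * r (a * σ j)) :=
  smul_inv_mul_eq_smul_inv_mul hc _ _ _

theorem shap_eq_of_inv_mul_mem {K : Subgroup Γ} (r : Γ → Δ)
    (hrK : ∀ a b : Γ, b ∈ K → ((r a : Γ))⁻¹ * (r (a * b) : Γ) ∈ K)
    (hc : ∀ (δ : Δ) (σ : Fin (k + 1) → Δ), c (fun j => δ * σ j) = δ • c σ)
    (hcK : ∀ σ σ' : Fin (k + 1) → Δ,
      (∀ j, ((σ j : Γ))⁻¹ * ((σ' j : Γ)) ∈ K) → c σ = c σ')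
    {σ σ' : Fin (k + 1) → Γ} {a a' : Γ} (h : ∀ j, (a * σ j)⁻¹ * (a' * σ' j) ∈ K) :
    shap r c σ a = shap r c σ' a' := by
  rw [shap_eq_smul r hc σ a (r a), shap_eq_smul r hc σ' a' (r a)]
  congr 1
  refine hcK _ _ fun j => ?_
  have hr := hrK (a * σ j) _ (h j)
  rw [mul_inv_cancel_left] at hr
  simpa only [Subgroup.coe_mul, Subgroup.coe_inv, mul_inv_rev, inv_inv, mul_assoc,
    inv_mul_cancel_left, mul_inv_cancel_left] using hr

end Shapiro

theorem stmt11_general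
    (Γ : Type) [Group Γ] (Δ : Subgroup Γ) (K : Subgroup Γ) [K.Normal]
    (X : Type) [AddCommGroup X] [DistribMulAction Δ X]
    (r : Γ → Δ)
    (hreq : ∀ (δ : Δ) (γ : Γ), r ((δ : Γ) * γ) = δ * r γ)
    (hrK : ∀ a b : Γ, b ∈ K → ((r a : Γ))⁻¹ * (r (a * b) : Γ) ∈ K)
    (k : ℕ) (c : (Fin (k + 1) → Δ) → X)
    (hc_equiv : ∀ (δ : Δ) (σ : Fin (k + 1) → Δ), c (fun j => δ * σ j) = δ • c σ)
    (hc_K : ∀ σ σ' : Fin (k + 1) → Δ,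
      (∀ j, ((σ j : Γ))⁻¹ * ((σ' j : Γ)) ∈ K) → c σ = c σ') :
    -- (1) each value is a smooth vector of the induced module:
    (∀ (σ : Fin (k + 1) → Γ) (a b : Γ), b ∈ K → shap r c σ (a * b) = shap r c σ a) ∧
    (∀ (σ : Fin (k + 1) → Γ) (δ : Δ) (a : Γ),
      shap r c σ ((δ : Γ) * a) = δ • shap r c σ a) ∧
    -- (2) S(c) is a continuous Γ-equivariant homogeneous cochain:
    (∀ (σ : Fin (k + 1) → Γ) (τ : Γ) (a : Γ),
      shap r c (fun j => τ * σ j) a = shap r c σ (a * τ)) ∧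
    (∀ (σ σ' : Fin (k + 1) → Γ) (a : Γ),
      (∀ j, (σ j)⁻¹ * σ' j ∈ K) → shap r c σ a = shap r c σ' a) := by
  refine ⟨fun σ a b hb => ?_, fun σ δ a => ?_, fun σ τ a => ?_, fun σ σ' a h => ?_⟩
  · refine shap_eq_of_inv_mul_mem r hrK hc_equiv hc_K fun j => ?_
    have hconj : (σ j)⁻¹ * b⁻¹ * σ j ∈ K := ‹K.Normal›.conj_mem' _ (K.inv_mem hb) (σ j)
    simpa only [mul_inv_rev, mul_assoc, inv_mul_cancel_left] using hconj
  · rw [shap_eq_smul r hc_equiv σ _ (δ * r a), shap, mul_smul]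
    simp only [mul_assoc, hreq, mul_inv_rev, inv_mul_cancel_left]
  · rw [shap_eq_smul r hc_equiv σ (a * τ) (r a), shap]
    simp only [mul_assoc]
  · exact shap_eq_of_inv_mul_mem r hrK hc_equiv hc_K fun j => by
      simpa only [mul_inv_rev, mul_assoc, inv_mul_cancel_left] using h j

/-- Lemma B.3: the Shapiro map is well defined: for a continuous
`Δ`-equivariant homogeneous `k`-cochain `c` (inflated from a level `K`), the function
`S(c)(σ₀,…,σ_k)` lies in the smooth induction `Ind_Δ^Γ X` (it is continuous and
`Δ`-equivariant in `a`), and `S(c)` is continuous and `Γ`-equivariant in `(σ₀,…,σ_k)`. -/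
theorem stmt11
    (Γ : Type) [Group Γ] (Δ : Subgroup Γ) (K : Subgroup Γ) [K.Normal]
    (X : Type) [AddCommGroup X] [DistribMulAction Δ X]
    (r : Γ → Δ)
    (hreq : ∀ (δ : Δ) (γ : Γ), r ((δ : Γ) * γ) = δ * r γ)
    (hr1 : r 1 = 1)
    (hrK : ∀ a b : Γ, b ∈ K → ((r a : Γ))⁻¹ * (r (a * b) : Γ) ∈ K)
    (k : ℕ) (c : (Fin (k + 1) → Δ) → X)
    (hc_equiv : ∀ (δ : Δ) (σ : Fin (k + 1) → Δ), c (fun j => δ * σ j) = δ • c σ)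
    (hc_K : ∀ σ σ' : Fin (k + 1) → Δ,
      (∀ j, ((σ j : Γ))⁻¹ * ((σ' j : Γ)) ∈ K) → c σ = c σ')
    (hc_fix : ∀ δ : Δ, (δ : Γ) ∈ K → ∀ σ : Fin (k + 1) → Δ,
      c (fun j => δ * σ j) = c σ) :
    -- (1) each value is a smooth vector of the induced module:
    (∀ (σ : Fin (k + 1) → Γ) (a b : Γ), b ∈ K → shap r c σ (a * b) = shap r c σ a) ∧
    (∀ (σ : Fin (k + 1) → Γ) (δ : Δ) (a : Γ),
      shap r c σ ((δ : Γ) * a) = δ • shap r c σ a) ∧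
    -- (2) S(c) is a continuous Γ-equivariant homogeneous cochain:
    (∀ (σ : Fin (k + 1) → Γ) (τ : Γ) (a : Γ),
      shap r c (fun j => τ * σ j) a = shap r c σ (a * τ)) ∧
    (∀ (σ σ' : Fin (k + 1) → Γ) (a : Γ),
      (∀ j, (σ j)⁻¹ * σ' j ∈ K) → shap r c σ a = shap r c σ' a) :=
  stmt11_general Γ Δ K X r hreq hrK k c hc_equiv hc_K
end

section
/- In the setting of the explicit Shapiro map (Γ profinite, Δ closed, X a smooth abelian Δ-module): the Shapiro map S_Δ^Γ: C^k(Δ, X) → C^k(Γ, Ind_Δ^Γ X) commutes with the differentials on both complexes and is a section of the map C^k(Γ, Ind_Δ^Γ X) → C^k(Δ, X) given by restricting a cochain to Δ^{k+1} and then evaluating values (elements of Ind_Δ^Γ X) at 1 ∈ Γ. -/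
/-- Differential on homogeneous cochains:
`(∂c)(σ₀,…,σ_{k+1}) = Σ_j (−1)^j c(σ₀,…,σ̂_j,…,σ_{k+1})`. -/
def dd {G V : Type} [AddCommGroup V] {k : ℕ}
    (c : (Fin (k + 1) → G) → V) : (Fin (k + 2) → G) → V :=
  fun σ => ∑ j : Fin (k + 2), ((-1 : ℤ) ^ (j : ℕ)) • c (fun m => σ (j.succAbove m))

/-!
For a fixed `a`, `shap r c · a` is `c` precomposed coordinatewise with `γ ↦ r(a)⁻¹ r(aγ)` and
followed by the additive map `r(a) • ·`. The homogeneous differential is natural in both, so it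
commutes with the Shapiro map. The section property comes from `r δ = δ` for `δ ∈ Δ`.
-/

section Differential

variable {G H V W : Type} [AddCommGroup V] [AddCommGroup W] {k : ℕ}

theorem dd_apply {A : Type} (c : (Fin (k + 1) → G) → A → V) (σ : Fin (k + 2) → G) (a : A) :
    dd c σ a = dd (fun τ => c τ a) σ := by
  simp only [dd, Finset.sum_apply, Pi.smul_apply]

theorem dd_map_comp (φ : V →+ W) (f : G → H) (c : (Fin (k + 1) → H) → V)
    (σ : Fin (k + 2) → G) :
    dd (fun τ => φ (c (f ∘ τ))) σ = φ (dd c (f ∘ σ)) := by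
  simp only [dd, map_sum, map_zsmul]
  rfl

end Differential

section Shapiro

variable {Γ : Type} [Group Γ] {Δ : Subgroup Γ} {X : Type} [AddCommGroup X]
  [DistribMulAction Δ X] {k : ℕ}

theorem apply_coe_eq_of_map_mul_left {r : Γ → Δ}
    (hreq : ∀ (δ : Δ) (γ : Γ), r ((δ : Γ) * γ) = δ * r γ) (hr1 : r 1 = 1) (δ : Δ) :
    r δ = δ := by
  simpa [hr1] using hreq δ 1

theorem shap_coe_apply_one {r : Γ → Δ} (hr : ∀ δ : Δ, r δ = δ)
    (c : (Fin (k + 1) → Δ) → X) (δs : Fin (k + 1) → Δ) :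
    shap r c (fun j => (δs j : Γ)) 1 = c δs := by
  have hr1 : r 1 = 1 := hr 1
  simp only [shap, one_mul, hr, hr1, inv_one, one_smul]

theorem dd_shap (r : Γ → Δ) (c : (Fin (k + 1) → Δ) → X) (σ : Fin (k + 2) → Γ) (a : Γ) :
    dd (shap r c) σ a = shap r (dd c) σ a := by
  rw [dd_apply]
  exact dd_map_comp (DistribSMul.toAddMonoidHom X (r a)) (fun γ => (r a)⁻¹ * r (a * γ)) c σ

end Shapiro

/-- the Shapiro map commutes with the differentials and is a section of
the map given by restriction to `Δ` followed by evaluation at `1 ∈ Γ`. -/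
theorem stmt12
    (Γ : Type) [Group Γ] (Δ : Subgroup Γ)
    (X : Type) [AddCommGroup X] [DistribMulAction Δ X]
    (r : Γ → Δ)
    (hreq : ∀ (δ : Δ) (γ : Γ), r ((δ : Γ) * γ) = δ * r γ)
    (hr1 : r 1 = 1)
    (k : ℕ) (c : (Fin (k + 1) → Δ) → X) :
    -- section of restriction-evaluation
    (∀ δs : Fin (k + 1) → Δ, shap r c (fun j => (δs j : Γ)) 1 = c δs) ∧
    -- commutes with the differentials
    (∀ (σ : Fin (k + 2) → Γ) (a : Γ),
      dd (shap r c) σ a = shap r (dd c) σ a) :=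
  ⟨shap_coe_apply_one (apply_coe_eq_of_map_mul_left hreq hr1) c, dd_shap r c⟩
end

section
/- Shapiro coboundary comparison: Let Γ be a profinite group, Δ a closed subgroup, X a smooth abelian Δ-module, and let (r, s) and (r̄, s̄) be two section data for Δ\Γ as above, with corresponding Shapiro maps S and S̄ in degree 2. Given a 2-cocycle z ∈ Z²(Δ, X) (homogeneous), define the 1-cochain c ∈ C¹(Γ, Ind_Δ^Γ X) by c(σ₀, σ₁)(a) = z(r(aσ₀)r(aσ₁), r̄(aσ₀)) · z(r(aσ₁), r̄(aσ₀), r̄(aσ₁))⁻¹ [with appropriate homogeneous-cochain conventions]. Then ∂c = S(z) · S̄(z)⁻¹, i.e., the two Shapiro images of z differ by the explicit coboundary ∂c. -/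
/-- The explicit comparison 1-cochain between the Shapiro maps attached to two
section data `r` and `r̄`. -/
def cc {Γ : Type} [Group Γ] {Δ : Subgroup Γ} {X : Type} [AddCommGroup X]
    [DistribMulAction Δ X] (r rbar : Γ → Δ)
    (z : (Fin 3 → Δ) → X) : (Fin 2 → Γ) → Γ → X :=
  fun σ a =>
    z ![r (a * σ 0), r (a * σ 1), rbar (a * σ 1)]
      - z ![r (a * σ 0), rbar (a * σ 0), rbar (a * σ 1)]

lemma dd_two {G V : Type} [AddCommGroup V] (c : (Fin 2 → G) → V) (v : Fin 3 → G) :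
    dd c v = c ![v 1, v 2] - c ![v 0, v 2] + c ![v 0, v 1] := by
  have h (i : Fin 3) :
      (fun m => v (i.succAbove m)) = ![v (i.succAbove 0), v (i.succAbove 1)] := by
    ext m; fin_cases m <;> rfl
  simp only [dd, Fin.sum_univ_succ, Fin.sum_univ_zero, h]
  simp [pow_succ, sub_eq_add_neg, add_assoc]
  rfl

lemma dd_three {G V : Type} [AddCommGroup V] (c : (Fin 3 → G) → V) (v : Fin 4 → G) :
    dd c v = c ![v 1, v 2, v 3] - c ![v 0, v 2, v 3] + c ![v 0, v 1, v 3]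
      - c ![v 0, v 1, v 2] := by
  have h (i : Fin 4) : (fun m => v (i.succAbove m)) =
      ![v (i.succAbove 0), v (i.succAbove 1), v (i.succAbove 2)] := by
    ext m; fin_cases m <;> rfl
  simp only [dd, Fin.sum_univ_succ, Fin.sum_univ_zero, h]
  simp [pow_succ, sub_eq_add_neg, add_assoc]
  rfl

lemma shap_eq_of_smul_equivariant {Γ : Type} [Group Γ] {Δ : Subgroup Γ} {X : Type}
    [AddCommGroup X] [DistribMulAction Δ X] (q : Γ → Δ) {k : ℕ}
    {c : (Fin (k + 1) → Δ) → X}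
    (hc : ∀ (δ : Δ) (σ : Fin (k + 1) → Δ), c (fun j => δ * σ j) = δ • c σ)
    (σ : Fin (k + 1) → Γ) (a : Γ) :
    shap q c σ a = c (fun j => q (a * σ j)) := by
  simp only [shap, ← hc, mul_inv_cancel_left]

lemma cocycle_prism {G V : Type} [AddCommGroup V] {z : (Fin 3 → G) → V}
    (hz : ∀ σ : Fin 4 → G, dd z σ = 0) (u v : Fin 3 → G) :
    z ![u 1, u 2, v 2] - z ![u 1, v 1, v 2] - (z ![u 0, u 2, v 2] - z ![u 0, v 0, v 2])
      + (z ![u 0, u 1, v 1] - z ![u 0, v 0, v 1]) = z u - z v := by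
  have hA := hz ![u 0, u 1, u 2, v 2]
  have hB := hz ![u 0, u 1, v 1, v 2]
  have hC := hz ![u 0, v 0, v 1, v 2]
  simp only [dd_three, Matrix.cons_val] at hA hB hC
  have eta (w : Fin 3 → G) : w = ![w 0, w 1, w 2] := (FinVec.etaExpand_eq w).symm
  conv_rhs => rw [eta u, eta v]
  linear_combination (norm := abel) hA - hB + hC

theorem stmt13_general
    (Γ : Type) [Group Γ] (Δ : Subgroup Γ)
    (X : Type) [AddCommGroup X] [DistribMulAction Δ X]
    (r rbar : Γ → Δ)
    (z : (Fin 3 → Δ) → X)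
    (hz_equiv : ∀ (δ : Δ) (σ : Fin 3 → Δ), z (fun j => δ * σ j) = δ • z σ)
    (hz_cocycle : ∀ σ : Fin 4 → Δ, dd z σ = 0) :
    ∀ (σ : Fin 3 → Γ) (a : Γ),
      dd (cc r rbar z) σ a = shap r z σ a - shap rbar z σ a := by
  intro σ a
  rw [dd_two, shap_eq_of_smul_equivariant r hz_equiv, shap_eq_of_smul_equivariant rbar hz_equiv,
    ← cocycle_prism hz_cocycle]
  rfl

/-- Lemma B.4: for a homogeneous 2-cocycle `z ∈ Z²(Δ, X)` and two
section data `(r, s)` and `(r̄, s̄)`, the explicit 1-cochain `c` satisfies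
`∂c = S(z) − S̄(z)`, i.e. the two Shapiro images of `z` differ by this explicit
coboundary. -/
theorem stmt13
    (Γ : Type) [Group Γ] (Δ : Subgroup Γ)
    (X : Type) [AddCommGroup X] [DistribMulAction Δ X]
    (r rbar : Γ → Δ)
    (hreq : ∀ (δ : Δ) (γ : Γ), r ((δ : Γ) * γ) = δ * r γ)
    (hrbareq : ∀ (δ : Δ) (γ : Γ), rbar ((δ : Γ) * γ) = δ * rbar γ)
    (hr1 : r 1 = 1) (hrbar1 : rbar 1 = 1)
    (z : (Fin 3 → Δ) → X)
    (hz_equiv : ∀ (δ : Δ) (σ : Fin 3 → Δ), z (fun j => δ * σ j) = δ • z σ)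
    (hz_cocycle : ∀ σ : Fin 4 → Δ, dd z σ = 0) :
    ∀ (σ : Fin 3 → Γ) (a : Γ),
      dd (cc r rbar z) σ a = shap r z σ a - shap rbar z σ a :=
  stmt13_general Γ Δ X r rbar z hz_equiv hz_cocycle
end

section
/- Change of variables for M_{E,Ṡ_E,N}: with Γ finite acting on finite set S, Ṡ orbit representatives (write v̇ ∈ Ṡ for the representative of the orbit of v; assume for simplicity Ṡ indexed by the orbit set S̄ = Γ\S), the map f ↦ φ given by φ(v̄, σ) = f(σ, σ·v̇) for v̄ ∈ S̄ with representative v̇ ∈ Ṡ, defines a Γ-equivariant isomorphism from M_Ṡ (functions f: Γ×S → (1/N)Z/Z satisfying the row-sum, column-sum, and support conditions) onto the group of functions φ: S̄ × Γ → (1/N)Z/Z satisfying: (1) Σ_{σ ∈ Stab_Γ(v̇)} φ(v̄, θσ) = 0 for all θ ∈ Γ, v̄ ∈ S̄; (2) Σ_{v̄ ∈ S̄} φ(v̄, θ) = 0 for all θ ∈ Γ; where Γ acts on the target by (τφ)(v̄, θ) = φ(v̄, τ⁻¹θ). -/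
/-- The change of variables `f ↦ φ`, `φ(v̄, σ) = f(σ, σ·v̇)`. -/
def Phi {Γ S Sbar : Type} [Group Γ] [MulAction Γ S] (dot : Sbar → S) (N : ℕ)
    (f : Γ × S → ZMod N) : Sbar × Γ → ZMod N :=
  fun x => f (x.2, x.2 • dot x.1)

/-!
An element `f` of `M_Ṡ` is supported on the pairs `(σ, σ • v̇)`, so it is determined by
`φ(v̄, σ) = f(σ, σ • v̇)`, and the inverse map extends `φ` by zero. Under this change of
variables the row `σ` of `f` becomes `Σ_{v̄} φ(v̄, σ)`, and the column of `w = θ • v̇` becomes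
`Σ_{σ ∈ Stab(v̇)} φ(v̄, θσ)`, since `f(θσ, θ • v̇) ≠ 0` forces `σ` to fix `v̇`.
-/

open Finset

section ChangeOfVariables

variable {Γ S Sbar : Type} [Group Γ] [MulAction Γ S] {p : S → Sbar} {dot : Sbar → S}

theorem inv_smul_mem_range_iff (hdot : ∀ q, p (dot q) = q)
    (hp : ∀ (σ : Γ) (w : S), p (σ • w) = p w) (σ : Γ) (w : S) :
    σ⁻¹ • w ∈ Set.range dot ↔ σ • dot (p w) = w := by
  constructor
  · rintro ⟨q, hq⟩
    rw [← eq_inv_smul_iff, ← hq, ← hp σ⁻¹ w, ← hq, hdot]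
  · intro h
    exact ⟨p w, eq_inv_smul_iff.2 h⟩

variable {N : ℕ} {f : Γ × S → ZMod N}

theorem sum_Phi_eq_sum_row [Fintype Sbar] [Fintype S] (hdot : ∀ q, p (dot q) = q)
    (hp : ∀ (σ : Γ) (w : S), p (σ • w) = p w)
    (hsupp : ∀ (σ : Γ) (w : S), f (σ, w) ≠ 0 → σ⁻¹ • w ∈ Set.range dot) (θ : Γ) :
    ∑ q : Sbar, Phi dot N f (q, θ) = ∑ w : S, f (θ, w) := by
  refine Fintype.sum_of_injective (fun q => θ • dot q)
    ((MulAction.injective θ).comp (Function.LeftInverse.injective hdot)) _ _ ?_ fun _ => rfl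
  intro w hw
  by_contra hne
  exact hw ⟨p w, (inv_smul_mem_range_iff hdot hp θ w).1 (hsupp θ w hne)⟩

theorem sum_stabilizer_Phi_eq_sum_column [Fintype Γ] [DecidableEq S]
    (hdot : ∀ q, p (dot q) = q)
    (hp : ∀ (σ : Γ) (w : S), p (σ • w) = p w)
    (hsupp : ∀ (σ : Γ) (w : S), f (σ, w) ≠ 0 → σ⁻¹ • w ∈ Set.range dot) (q : Sbar) (θ : Γ) :
    ∑ σ ∈ univ.filter (fun σ : Γ => σ • dot q = dot q), Phi dot N f (q, θ * σ)
      = ∑ σ : Γ, f (σ, θ • dot q) := by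
  rw [sum_filter]
  refine Fintype.sum_equiv (Equiv.mulLeft θ) _ _ fun σ => ?_
  rw [Equiv.coe_mulLeft]
  split_ifs with hσ
  · simp only [Phi, mul_smul, hσ]
  · symm
    by_contra hne
    have h := (inv_smul_mem_range_iff hdot hp _ _).1 (hsupp _ _ hne)
    rw [hp, hdot, mul_smul] at h
    exact hσ (smul_left_cancel θ h)

end ChangeOfVariables

section PhiInv

variable {Γ S Sbar M : Type} [Group Γ] [MulAction Γ S] [Zero M]

open Classical in
noncomputable def PhiInv (p : S → Sbar) (dot : Sbar → S) (φ : Sbar × Γ → M) : Γ × S → M :=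
  fun x => if x.1⁻¹ • x.2 ∈ Set.range dot then φ (p x.2, x.1) else 0

variable {p : S → Sbar} {dot : Sbar → S}

theorem mem_range_of_PhiInv_ne_zero (φ : Sbar × Γ → M) (σ : Γ) (w : S) (h : PhiInv p dot φ (σ, w) ≠ 0) :
    σ⁻¹ • w ∈ Set.range dot := by
  by_contra hw
  exact h (if_neg hw)

theorem Phi_PhiInv (hdot : ∀ q, p (dot q) = q) (hp : ∀ (σ : Γ) (w : S), p (σ • w) = p w)
    {N : ℕ} (φ : Sbar × Γ → ZMod N) : Phi dot N (PhiInv p dot φ) = φ := by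
  funext ⟨q, θ⟩
  simp [Phi, PhiInv, hp, hdot]

theorem PhiInv_Phi (hdot : ∀ q, p (dot q) = q) (hp : ∀ (σ : Γ) (w : S), p (σ • w) = p w)
    {N : ℕ} {f : Γ × S → ZMod N}
    (hsupp : ∀ (σ : Γ) (w : S), f (σ, w) ≠ 0 → σ⁻¹ • w ∈ Set.range dot) :
    PhiInv p dot (Phi dot N f) = f := by
  funext ⟨σ, w⟩
  by_cases hw : σ⁻¹ • w ∈ Set.range dot
  · simp only [PhiInv, if_pos hw, Phi, (inv_smul_mem_range_iff hdot hp σ w).1 hw]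
  · rw [PhiInv, if_neg hw]
    by_contra hne
    exact hw (hsupp σ w (Ne.symm hne))

end PhiInv

theorem stmt15_general
    (Γ S Sbar : Type) [Group Γ] [Fintype Γ] [Fintype S] [Fintype Sbar]
    [DecidableEq S] [MulAction Γ S]
    (p : S → Sbar)
    (hporb : ∀ w w' : S, p w = p w' ↔ ∃ σ : Γ, σ • w = w')
    (dot : Sbar → S) (hdot : ∀ q, p (dot q) = q)
    (N : ℕ) :
    -- the map lands in the target group
    (∀ f : Γ × S → ZMod N,
      (∀ σ : Γ, ∑ w : S, f (σ, w) = 0) →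
      (∀ w : S, ∑ σ : Γ, f (σ, w) = 0) →
      (∀ (σ : Γ) (w : S), f (σ, w) ≠ 0 → σ⁻¹ • w ∈ Set.range dot) →
      ((∀ (q : Sbar) (θ : Γ),
          ∑ σ ∈ Finset.univ.filter (fun σ : Γ => σ • dot q = dot q),
            Phi dot N f (q, θ * σ) = 0) ∧
       (∀ θ : Γ, ∑ q : Sbar, Phi dot N f (q, θ) = 0))) ∧
    -- Γ-equivariance
    (∀ (f : Γ × S → ZMod N) (τ : Γ) (q : Sbar) (θ : Γ),
      Phi dot N (fun x => f (τ⁻¹ * x.1, τ⁻¹ • x.2)) (q, θ)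
        = Phi dot N f (q, τ⁻¹ * θ)) ∧
    -- bijectivity onto the target group
    (∀ φ : Sbar × Γ → ZMod N,
      (∀ (q : Sbar) (θ : Γ),
        ∑ σ ∈ Finset.univ.filter (fun σ : Γ => σ • dot q = dot q), φ (q, θ * σ) = 0) →
      (∀ θ : Γ, ∑ q : Sbar, φ (q, θ) = 0) →
      ∃! f : Γ × S → ZMod N,
        ((∀ σ : Γ, ∑ w : S, f (σ, w) = 0) ∧
         (∀ w : S, ∑ σ : Γ, f (σ, w) = 0) ∧
         (∀ (σ : Γ) (w : S), f (σ, w) ≠ 0 → σ⁻¹ • w ∈ Set.range dot)) ∧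
        Phi dot N f = φ) := by
  have hp : ∀ (σ : Γ) (w : S), p (σ • w) = p w :=
    fun σ w => ((hporb w (σ • w)).2 ⟨σ, rfl⟩).symm
  refine ⟨fun f hrow hcol hsupp => ⟨fun q θ => ?_, fun θ => ?_⟩,
    fun f τ q θ => by simp only [Phi, mul_smul], fun φ hφstab hφsum => ?_⟩
  · rw [sum_stabilizer_Phi_eq_sum_column hdot hp hsupp]
    exact hcol _
  · rw [sum_Phi_eq_sum_row hdot hp hsupp]
    exact hrow θ
  have hsupp := mem_range_of_PhiInv_ne_zero (p := p) (dot := dot) φ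
  refine ⟨PhiInv p dot φ, ⟨⟨fun σ => ?_, fun w => ?_, hsupp⟩, Phi_PhiInv hdot hp φ⟩, ?_⟩
  · rw [← sum_Phi_eq_sum_row hdot hp hsupp, Phi_PhiInv hdot hp]
    exact hφsum σ
  · obtain ⟨ρ, hρ⟩ := (hporb (dot (p w)) w).1 (hdot (p w))
    rw [← hρ, ← sum_stabilizer_Phi_eq_sum_column hdot hp hsupp, Phi_PhiInv hdot hp]
    exact hφstab _ ρ
  · rintro f ⟨⟨-, -, hfsupp⟩, rfl⟩
    exact (PhiInv_Phi hdot hp hfsupp).symm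

/-- Lemma lem:mesn_phi: the change of variables `φ(v̄,σ) = f(σ, σ·v̇)`
is a `Γ`-equivariant isomorphism from `M_{E,Ṡ_E,N}` onto the group of functions
`φ : S̄ × Γ → (1/N)ℤ/ℤ` with `Σ_{σ ∈ Stab(v̇)} φ(v̄, θσ) = 0` and
`Σ_{v̄} φ(v̄, θ) = 0`, with `Γ` acting by `(τφ)(v̄,θ) = φ(v̄, τ⁻¹θ)`. -/
theorem stmt15
    (Γ S Sbar : Type) [Group Γ] [Fintype Γ] [Fintype S] [Fintype Sbar]
    [DecidableEq S] [MulAction Γ S]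
    (p : S → Sbar) (hpsur : Function.Surjective p)
    (hporb : ∀ w w' : S, p w = p w' ↔ ∃ σ : Γ, σ • w = w')
    (dot : Sbar → S) (hdot : ∀ q, p (dot q) = q)
    (N : ℕ) :
    -- the map lands in the target group
    (∀ f : Γ × S → ZMod N,
      (∀ σ : Γ, ∑ w : S, f (σ, w) = 0) →
      (∀ w : S, ∑ σ : Γ, f (σ, w) = 0) →
      (∀ (σ : Γ) (w : S), f (σ, w) ≠ 0 → σ⁻¹ • w ∈ Set.range dot) →
      ((∀ (q : Sbar) (θ : Γ),
          ∑ σ ∈ Finset.univ.filter (fun σ : Γ => σ • dot q = dot q),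
            Phi dot N f (q, θ * σ) = 0) ∧
       (∀ θ : Γ, ∑ q : Sbar, Phi dot N f (q, θ) = 0))) ∧
    -- Γ-equivariance
    (∀ (f : Γ × S → ZMod N) (τ : Γ) (q : Sbar) (θ : Γ),
      Phi dot N (fun x => f (τ⁻¹ * x.1, τ⁻¹ • x.2)) (q, θ)
        = Phi dot N f (q, τ⁻¹ * θ)) ∧
    -- bijectivity onto the target group
    (∀ φ : Sbar × Γ → ZMod N,
      (∀ (q : Sbar) (θ : Γ),
        ∑ σ ∈ Finset.univ.filter (fun σ : Γ => σ • dot q = dot q), φ (q, θ * σ) = 0) →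
      (∀ θ : Γ, ∑ q : Sbar, φ (q, θ) = 0) →
      ∃! f : Γ × S → ZMod N,
        ((∀ σ : Γ, ∑ w : S, f (σ, w) = 0) ∧
         (∀ w : S, ∑ σ : Γ, f (σ, w) = 0) ∧
         (∀ (σ : Γ) (w : S), f (σ, w) ≠ 0 → σ⁻¹ • w ∈ Set.range dot)) ∧
        Phi dot N f = φ) :=
  stmt15_general Γ S Sbar p hporb dot hdot N
end

section
/- Exact sequence for M_{E,Ṡ_E,N} (abstract form): with Γ a finite group, S̄ a finite set (of 'places'), stabilizer subgroups Γ_{v̄} ≤ Γ for each v̄ ∈ S̄ satisfying: for every pair θ₁, θ₂ ∈ Γ there exists v̄₀ ∈ S̄ with θ₂⁻¹θ₁ ∈ Γ_{v̄₀} — then the sequence 0 → M_φ → Maps(S̄, Maps(Γ, (1/N)Z/Z))₀ → Maps(⊔_{v̄} Γ/Γ_{v̄}, (1/N)Z/Z)₀ → 0 is exact, where: M_φ is the group of φ: S̄ × Γ → (1/N)Z/Z with Σ_{σ∈Γ_{v̄}} φ(v̄, θσ) = 0 and Σ_{v̄} φ(v̄,θ) = 0; the middle group consists of φ with only the condition Σ_{v̄}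 φ(v̄,θ) = 0; the map to the third group sends φ to ξ with ξ(θΓ_{v̄}) = Σ_{σ∈Γ_{v̄}} φ(v̄, θσ); the subscript 0 on the third group means total sum of values zero. In particular, the third map is well-defined, lands in the sum-zero subgroup, and is surjective. -/
/-! Summing `φ (v̄, θ * σ)` over `σ ∈ Γ_v̄` is summing `φ (v̄, ·)` over the coset `θΓ_v̄`, which
gives well-definedness and, by summing over all cosets, the vanishing of the total sum.
A sum-zero `ξ` lifts to `f` by placing `ξ (v̄, c)` at the representative of `c`; the column sums
`c θ = Σ_v̄ f (v̄, θ)` then have total sum `Σ ξ = 0`. To kill them, assign each `θ` some `v̄` with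
`θ ∈ Γ_v̄` and let `u_v̄` be `c` restricted to the `θ` assigned to `v̄`. Since `u_v̄` lives on the
identity coset of `Γ_v̄`, the function `u_v̄ - (Σ u_v̄) δ₁` has all coset sums zero, and together
these have column sums `c - (Σ c) δ₁ = c`. -/

open Finset

section Coset

variable {Γ M : Type*} [Group Γ] [Fintype Γ] (H : Subgroup Γ) [DecidablePred (· ∈ H)]

theorem sum_mem_mul_eq_sum_fiber [AddCommMonoid M] (f : Γ → M) (θ : Γ) :
    ∑ σ ∈ univ.filter (· ∈ H), f (θ * σ) =
      ∑ x ∈ univ.filter (fun x : Γ => (x : Γ ⧸ H) = θ), f x := by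
  refine sum_nbij' (θ * ·) (θ⁻¹ * ·) ?_ ?_ ?_ ?_ ?_ <;> simp [QuotientGroup.eq]
  exact fun x hx => by simpa using H.inv_mem hx

theorem sum_quotient_sum_mem_out_mul [AddCommMonoid M] (f : Γ → M) :
    ∑ c : Γ ⧸ H, ∑ σ ∈ univ.filter (· ∈ H), f (Quotient.out c * σ) = ∑ x, f x := by
  simp_rw [sum_mem_mul_eq_sum_fiber, QuotientGroup.out_eq']
  exact sum_fiberwise univ _ f

theorem exists_sum_mem_mul_eq [AddCommMonoid M] (ξ : Γ ⧸ H → M) :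
    ∃ f : Γ → M, ∀ θ : Γ, ∑ σ ∈ univ.filter (· ∈ H), f (θ * σ) = ξ θ := by
  classical
  let f : Γ → M := fun x => if x = Quotient.out (x : Γ ⧸ H) then ξ x else 0
  refine ⟨f, fun θ => (sum_mem_mul_eq_sum_fiber H f θ).trans ?_⟩
  have hf : ∀ x ∈ univ.filter (fun x : Γ => (x : Γ ⧸ H) = θ),
      f x = if x = Quotient.out (θ : Γ ⧸ H) then ξ θ else 0 := fun x hx => by
    simp only [f, (mem_filter.mp hx).2]
  rw [sum_congr rfl hf, sum_ite_eq']
  simp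

theorem sum_mem_mul_sub_single_sum_eq_zero [DecidableEq Γ] [AddCommGroup M] {u : Γ → M}
    (hu : ∀ x ∉ H, u x = 0) (θ : Γ) :
    ∑ σ ∈ univ.filter (· ∈ H), (u - Pi.single (1 : Γ) (∑ x, u x) : Γ → M) (θ * σ) = 0 := by
  rw [sum_mem_mul_eq_sum_fiber]
  simp only [Pi.sub_apply, sum_sub_distrib, Pi.single_apply, sum_ite_eq', mem_filter, mem_univ,
    true_and, QuotientGroup.eq, inv_one, one_mul]
  by_cases hθ : θ ∈ H
  · rw [if_pos hθ, sub_eq_zero]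
    refine sum_filter_of_ne fun x _ hx => ?_
    exact H.mul_mem (H.inv_mem (not_imp_comm.mp (hu x) hx)) hθ
  · rw [if_neg hθ, sub_zero]
    refine sum_eq_zero fun x hx => hu x fun hxH => hθ ?_
    simpa using H.mul_mem hxH (mem_filter.mp hx).2

end Coset

theorem exists_sum_mem_mul_eq_zero_and_sum_eq {Γ ι M : Type*} [Group Γ] [Fintype Γ]
    [DecidableEq Γ] [Fintype ι] [AddCommGroup M] (G : ι → Subgroup Γ)
    [∀ i, DecidablePred (· ∈ G i)] (hG : ∀ θ, ∃ i, θ ∈ G i) (c : Γ → M)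
    (hc : ∑ θ, c θ = 0) :
    ∃ ψ : ι × Γ → M, (∀ θ, ∑ i, ψ (i, θ) = c θ) ∧
      ∀ i θ, ∑ σ ∈ univ.filter (· ∈ G i), ψ (i, θ * σ) = 0 := by
  classical
  choose g hg using hG
  let u : ι → Γ → M := fun i x => if g x = i then c x else 0
  have hu : ∀ i x, x ∉ G i → u i x = 0 := fun i x hx => if_neg fun h : g x = i => hx (h ▸ hg x)
  refine ⟨fun p => (u p.1 - Pi.single (1 : Γ) (∑ x, u p.1 x) : Γ → M) p.2, fun θ => ?_,
    fun i => sum_mem_mul_sub_single_sum_eq_zero (G i) (hu i)⟩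
  have hu_sum : ∑ i, ∑ x, u i x = 0 := by
    rw [sum_comm]
    simpa [u] using hc
  have hu_col : ∑ i, u i θ = c θ := by simp [u]
  simp only [Pi.sub_apply, sum_sub_distrib, hu_col, sub_eq_self]
  by_cases hθ : θ = 1
  · simpa [hθ] using hu_sum
  · simp [hθ]

/-- Lemma lem:mesn_phiseq: the sequence
`0 → M_φ → Maps(S̄, Maps(Γ,(1/N)ℤ/ℤ))₀ → Maps(⊔_{v̄} Γ/Γ_{v̄}, (1/N)ℤ/ℤ)₀ → 0`
is exact: the map `φ ↦ ξ`, `ξ(θΓ_{v̄}) = Σ_{σ∈Γ_{v̄}} φ(v̄, θσ)`, is well defined on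
cosets, lands in the sum-zero subgroup, and is surjective (its kernel being `M_φ` by
definition). -/
theorem stmt16
    (Γ Sbar : Type) [Group Γ] [Fintype Γ] [DecidableEq Γ] [Fintype Sbar]
    (Gv : Sbar → Subgroup Γ) [∀ q, DecidablePred (· ∈ Gv q)]
    (N : ℕ)
    (hcov : ∀ θ₁ θ₂ : Γ, ∃ q : Sbar, θ₂⁻¹ * θ₁ ∈ Gv q) :
    -- (i) the map is well defined on cosets
    (∀ φ : Sbar × Γ → ZMod N,
      (∀ θ : Γ, ∑ q : Sbar, φ (q, θ) = 0) →
      ∀ (q : Sbar) (θ θ' : Γ), θ⁻¹ * θ' ∈ Gv q →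
        ∑ σ ∈ Finset.univ.filter (· ∈ Gv q), φ (q, θ * σ)
          = ∑ σ ∈ Finset.univ.filter (· ∈ Gv q), φ (q, θ' * σ)) ∧
    -- (ii) the image has total sum zero over the disjoint union of coset spaces
    (∀ φ : Sbar × Γ → ZMod N,
      (∀ θ : Γ, ∑ q : Sbar, φ (q, θ) = 0) →
      ∑ x : (q : Sbar) × (Γ ⧸ Gv q),
        ∑ σ ∈ Finset.univ.filter (· ∈ Gv x.1), φ (x.1, (Quotient.out x.2) * σ) = 0) ∧
    -- (iii) surjectivity onto the sum-zero functions on the disjoint union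
    (∀ ξ : ((q : Sbar) × (Γ ⧸ Gv q)) → ZMod N,
      (∑ x : (q : Sbar) × (Γ ⧸ Gv q), ξ x = 0) →
      ∃ φ : Sbar × Γ → ZMod N,
        (∀ θ : Γ, ∑ q : Sbar, φ (q, θ) = 0) ∧
        ∀ (q : Sbar) (θ : Γ),
          ∑ σ ∈ Finset.univ.filter (· ∈ Gv q), φ (q, θ * σ)
            = ξ ⟨q, QuotientGroup.mk θ⟩) := by
  refine ⟨fun φ _ q θ θ' h => ?_, fun φ hφ => ?_, fun ξ hξ => ?_⟩
  · simp only [sum_mem_mul_eq_sum_fiber (Gv q) (fun x => φ (q, x)), QuotientGroup.eq.mpr h]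
  · rw [Fintype.sum_sigma,
      sum_congr rfl fun q _ => sum_quotient_sum_mem_out_mul (Gv q) (fun x => φ (q, x)), sum_comm]
    exact sum_eq_zero fun θ _ => hφ θ
  · choose f hf using fun q => exists_sum_mem_mul_eq (Gv q) (fun c => ξ ⟨q, c⟩)
    have hf_sum : ∑ θ, ∑ q, f q θ = 0 := by
      rw [sum_comm, ← hξ, Fintype.sum_sigma]
      refine sum_congr rfl fun q _ => ?_
      rw [← sum_quotient_sum_mem_out_mul (Gv q)]
      simp only [hf, QuotientGroup.out_eq']
    obtain ⟨ψ, hψ_col, hψ⟩ := exists_sum_mem_mul_eq_zero_and_sum_eq Gv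
      (fun θ => by simpa using hcov θ 1) _ hf_sum
    refine ⟨fun p => f p.1 p.2 - ψ p, fun θ => ?_, fun q θ => ?_⟩
    · rw [sum_sub_distrib, hψ_col, sub_self]
    · rw [sum_sub_distrib, hf, hψ, sub_zero]
end
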